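/- Let n ≥ 2 and define a weight function w on the vertices of the total cyclic interval graph CG(n) by w({A,B}) = 1/min(|A|,|B|). Then w is a fractional clique, i.e., for every independent set S of CG(n) one has ∑_{v ∈ S} w(v) ≤ 1, and the total weight of w over all vertices of CG(n) equals n·H_{⌊(n−1)/2⌋} + (1 − p(n)). -/

import Mathlib

/-- A partition of `{0,…,n-1}` (modeled as `Fin n`) into an unordered pair of nonempty
disjoint subsets covering everything, modeled as a 2-element finset of parts. -/
def TKPart (n : ℕ) (P : Finset (Finset (Fin n))) : Prop :=
  P.card = 2 ∧ (∀ A ∈ P, A.Nonempty) ∧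
    (∀ A ∈ P, ∀ B ∈ P, A ≠ B → Disjoint A B) ∧ P.sup id = Finset.univ

/-- Vertices of the total Kneser graph. -/
abbrev TKVert (n : ℕ) := {P : Finset (Finset (Fin n)) // TKPart n P}

/-- The total Kneser graph `KG(n)`: two distinct partitions are adjacent iff they are
nested, i.e. some part of one is contained in some part of the other. -/
def KG (n : ℕ) : SimpleGraph (TKVert n) where
  Adj P Q := P ≠ Q ∧
    ((∃ A ∈ P.1, ∃ C ∈ Q.1, A ⊆ C) ∨ (∃ C ∈ Q.1, ∃ A ∈ P.1, C ⊆ A))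
  symm := by
    constructor
    rintro P Q ⟨hne, h⟩
    refine ⟨hne.symm, ?_⟩
    rcases h with ⟨A, hA, C, hC, hAC⟩ | ⟨C, hC, A, hA, hCA⟩
    · exact Or.inr ⟨A, hA, C, hC, hAC⟩
    · exact Or.inl ⟨C, hC, A, hA, hCA⟩
  loopless := ⟨fun P h => h.1 rfl⟩

/-- `A ⊆ Fin n` is a cyclic interval `{i, i+1, …, i+k-1} (mod n)` with `1 ≤ k ≤ n-1`. -/
def IsCyclicInterval {n : ℕ} (A : Finset (Fin n)) : Prop :=
  ∃ i k : ℕ, 1 ≤ k ∧ k ≤ n - 1 ∧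
    (↑A : Set (Fin n)) = {x : Fin n | ∃ j < k, (x : ℕ) = (i + j) % n}

/-- The vertices of the total cyclic interval graph: partitions both of whose parts are
cyclic intervals. -/
def CGSet (n : ℕ) : Set (TKVert n) := {P | ∀ A ∈ P.1, IsCyclicInterval A}

/-- The total cyclic interval graph `CG(n)`, the induced subgraph of `KG(n)` on partitions
into cyclic intervals. -/
def CG (n : ℕ) : SimpleGraph (CGSet n) := (KG n).induce (CGSet n)

/-- `min(|A|,|B|)` for a partition `{A,B}`. -/
def minPart {n : ℕ} (P : TKVert n) : ℕ :=
  P.1.inf' (Finset.card_pos.mp (by rw [P.2.1]; norm_num)) Finset.card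

/-!
A partition into two cyclic intervals is a pair of cut points of the `n`-cycle, and two such
partitions are non-nested exactly when their cut points interleave. So if an independent set `S`
contains `{I, Iᶜ}`, every other member of `S` has a cut strictly inside `I`, and distinct
members have distinct cuts there; hence `|S| ≤ min(|I|, |Iᶜ|)` for every vertex of `S`, and the
weights of `S` add up to at most `1`.

For the total weight, count each vertex by its part containing `0`: exactly `k` of the cyclic
intervals of length `k` contain `0`, so the total is `∑_{0<k<n} k / min(k, n - k)`. Below `n / 2`
every term is `1`; above it, `j = n - k ≤ ⌊(n - 1)/2⌋` contributes `n / j - 1`.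
-/

open Finset Fin.NatCast Fin.CommRing

variable {n : ℕ}

theorem Fin.val_sub_eq_ite (a b : Fin n) :
    ((a - b : Fin n) : ℕ) =
      if (b : ℕ) ≤ (a : ℕ) then (a : ℕ) - (b : ℕ) else n + (a : ℕ) - (b : ℕ) := by
  split_ifs with h
  · exact Fin.sub_val_of_le h
  · exact Fin.coe_sub_iff_lt.2 (not_le.1 h)

namespace TKPart

variable {P : Finset (Finset (Fin n))}

theorem exists_mem (hP : TKPart n P) (x : Fin n) : ∃ A ∈ P, x ∈ A := by
  simpa using Finset.mem_sup.1 (hP.2.2.2 ▸ mem_univ x)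

theorem eq_of_mem_of_mem (hP : TKPart n P) {A B : Finset (Fin n)} (hA : A ∈ P) (hB : B ∈ P)
    {x : Fin n} (hxA : x ∈ A) (hxB : x ∈ B) : A = B := by
  by_contra hAB
  exact disjoint_left.1 (hP.2.2.1 A hA B hB hAB) hxA hxB

theorem eq_pair_compl (hP : TKPart n P) {A : Finset (Fin n)} (hA : A ∈ P) : P = {A, Aᶜ} := by
  obtain ⟨B, C, hBC, rfl⟩ := card_eq_two.1 hP.1
  have hcompl : IsCompl B C :=
    ⟨hP.2.2.1 B (by simp) C (by simp) hBC, codisjoint_iff.2 (by simpa using hP.2.2.2)⟩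
  rcases mem_insert.1 hA with rfl | hA
  · rw [hcompl.compl_eq]
  · rw [mem_singleton.1 hA, pair_comm, hcompl.symm.compl_eq]

end TKPart

theorem tkPart_pair_compl {A : Finset (Fin n)} (hA : A.Nonempty) (hAc : Aᶜ.Nonempty) :
    TKPart n {A, Aᶜ} := by
  refine ⟨card_pair fun h => ?_, by simp [hA, hAc], ?_, by simp⟩
  · obtain ⟨x, hx⟩ := hA
    exact (mem_compl.1 (h ▸ hx)) hx
  · simp only [mem_insert, mem_singleton]
    rintro _ (rfl | rfl) _ (rfl | rfl) h
    exacts [absurd rfl h, disjoint_compl_right, disjoint_compl_left, absurd rfl h]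

theorem minPart_eq_min_card {P : TKVert n} {A : Finset (Fin n)} (h : P.1 = {A, Aᶜ}) :
    minPart P = min #A #Aᶜ := by
  obtain ⟨P, hP⟩ := P
  subst h
  simp [minPart, inf'_insert]

theorem CG_adj_of_subset {P Q : CGSet n} (hPQ : P ≠ Q) {A C : Finset (Fin n)}
    (hA : A ∈ P.1.1) (hC : C ∈ Q.1.1) (h : A ⊆ C) : (CG n).Adj P Q :=
  ⟨fun he => hPQ (Subtype.ext he), Or.inl ⟨A, hA, C, hC, h⟩⟩

/-- `{i, i + 1, …, i + k - 1}` in `ℤ/n`, as the points at forward distance `< k` from `i`. -/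
def cyclicInterval (i : Fin n) (k : ℕ) : Finset (Fin n) := {x | ((x - i : Fin n) : ℕ) < k}

@[simp]
theorem mem_cyclicInterval {i x : Fin n} {k : ℕ} :
    x ∈ cyclicInterval i k ↔ ((x - i : Fin n) : ℕ) < k := by
  simp [cyclicInterval]

section CyclicInterval

variable [NeZero n]

theorem start_mem_cyclicInterval (i : Fin n) {k : ℕ} (hk : 0 < k) : i ∈ cyclicInterval i k := by
  simpa using hk

theorem card_cyclicInterval (i : Fin n) {k : ℕ} (hk : k ≤ n) : #(cyclicInterval i k) = k := by
  have : cyclicInterval i k =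
      ({y : Fin n | (y : ℕ) < k} : Finset (Fin n)).map (addLeftEmbedding i) := by
    ext x
    simp [← eq_sub_iff_add_eq']
  rw [this, card_map, Fin.card_filter_val_lt, min_eq_right hk]

theorem compl_cyclicInterval (i : Fin n) {k : ℕ} (hk : k < n) :
    (cyclicInterval i k)ᶜ = cyclicInterval (i + (k : Fin n)) (n - k) := by
  ext x
  have hsub : x - (i + (k : Fin n)) = (x - i) - (k : Fin n) := by ring
  have hk' : ((k : Fin n) : ℕ) = k := Fin.val_cast_of_lt hk
  have := (x - i).isLt
  simp only [mem_compl, mem_cyclicInterval, hsub, Fin.val_sub_eq_ite, hk']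
  split_ifs <;> omega

theorem cyclicInterval_subset_of_mem {i j j' : Fin n} {l l' : ℕ}
    (hstart : ((i - j : Fin n) : ℕ) ≤ ((i - j' : Fin n) : ℕ))
    (hend : l - ((i - j : Fin n) : ℕ) ≤ l' - ((i - j' : Fin n) : ℕ))
    (hi : i ∈ cyclicInterval j l) (hi' : i ∈ cyclicInterval j' l') :
    cyclicInterval j l ⊆ cyclicInterval j' l' := by
  intro x hx
  rw [mem_cyclicInterval] at hi hi' hx ⊢
  have hjj : ((j - j' : Fin n) : ℕ) = ((i - j' : Fin n) : ℕ) - ((i - j : Fin n) : ℕ) := by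
    rw [show j - j' = (i - j') - (i - j) by ring]
    exact Fin.sub_val_of_le hstart
  rw [show x - j' = (x - j) + (j - j') by ring, Fin.val_add]
  exact (Nat.mod_le _ _).trans_lt (by omega)

theorem cyclicInterval_left_injective {k : ℕ} (hk0 : 0 < k) (hk : k < n) :
    Function.Injective (cyclicInterval · k : Fin n → Finset (Fin n)) := by
  intro i i' h
  have hone : ((1 : Fin n) : ℕ) = 1 := by rw [Fin.val_one', Nat.mod_eq_of_lt (by omega)]
  have h' : cyclicInterval i k = cyclicInterval i' k := h
  -- `i` is the only point of `cyclicInterval i k` whose predecessor lies outside it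
  have hi := start_mem_cyclicInterval i hk0
  have hpred : i - 1 ∉ cyclicInterval i k := by
    simp only [mem_cyclicInterval, show i - 1 - i = 0 - 1 by ring, Fin.val_sub_eq_ite, hone,
      Fin.val_zero]
    split_ifs <;> omega
  rw [h', mem_cyclicInterval] at hi hpred
  rw [show i - 1 - i' = (i - i') - 1 by ring, Fin.val_sub_eq_ite (i - i')] at hpred
  simp only [hone] at hpred
  have : ((i - i' : Fin n) : ℕ) = 0 := by split_ifs at hpred <;> omega
  exact sub_eq_zero.1 (Fin.ext this)

theorem coe_cyclicInterval_natCast (i : ℕ) {k : ℕ} (hk : k ≤ n) :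
    (cyclicInterval (i : Fin n) k : Set (Fin n)) =
      {x : Fin n | ∃ j < k, (x : ℕ) = (i + j) % n} := by
  ext x
  have hx : ∀ j : ℕ, (x : ℕ) = (i + j) % n ↔ x - i = j := by
    intro j
    rw [sub_eq_iff_eq_add', Fin.ext_iff, Fin.val_add, Fin.val_natCast, Fin.val_natCast,
      ← Nat.add_mod]
  simp only [mem_coe, mem_cyclicInterval, Set.mem_ofPred_eq, hx]
  constructor
  · exact fun h => ⟨_, h, (Fin.cast_val_eq_self _).symm⟩
  · rintro ⟨j, hj, hxj⟩
    rwa [hxj, Fin.val_cast_of_lt (by omega)]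

theorem isCyclicInterval_iff {A : Finset (Fin n)} :
    IsCyclicInterval A ↔ ∃ i k, 0 < k ∧ k < n ∧ A = cyclicInterval i k := by
  constructor
  · rintro ⟨i, k, hk0, hk, hA⟩
    refine ⟨i, k, hk0, by omega, coe_injective ?_⟩
    rw [hA, coe_cyclicInterval_natCast i (by omega)]
  · rintro ⟨i, k, hk0, hk, rfl⟩
    refine ⟨(i : ℕ), k, hk0, by omega, ?_⟩
    rw [← coe_cyclicInterval_natCast _ hk.le, Fin.cast_val_eq_self]

end CyclicInterval

section IndependentSet

variable [NeZero n]

theorem exists_cyclicInterval_mem (P : CGSet n) (x : Fin n) :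
    ∃ j l, cyclicInterval j l ∈ P.1.1 ∧ x ∈ cyclicInterval j l := by
  obtain ⟨A, hA, hxA⟩ := P.1.2.exists_mem x
  obtain ⟨j, l, -, -, rfl⟩ := isCyclicInterval_iff.1 (P.2 A hA)
  exact ⟨j, l, hA, hxA⟩

theorem card_le_card_of_indep {S : Finset (CGSet n)}
    (hS : ∀ P ∈ S, ∀ Q ∈ S, ¬ (CG n).Adj P Q)
    {P : CGSet n} (hP : P ∈ S) {I : Finset (Fin n)} (hI : I ∈ P.1.1) : #S ≤ #I := by
  obtain ⟨i, k, hk0, hk, rfl⟩ := isCyclicInterval_iff.1 (P.2 I hI)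
  choose j l hmem hi using fun Q : CGSet n => exists_cyclicInterval_mem Q i
  -- `t Q` is the distance from `i` to the cut ending the part of `Q` that contains `i`
  set t : CGSet n → ℕ := fun Q => l Q - ((i - j Q : Fin n) : ℕ)
  have hmaps : ∀ Q ∈ S.erase P, t Q ∈ Ioo 0 k := by
    intro Q hQ
    obtain ⟨hQP, hQ⟩ := mem_erase.1 hQ
    have hiQ := mem_cyclicInterval.1 (hi Q)
    refine mem_Ioo.2 ⟨Nat.sub_pos_of_lt hiQ, not_le.1 fun hkt => hS P hP Q hQ ?_⟩
    refine CG_adj_of_subset (Ne.symm hQP) hI (hmem Q) ?_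
    exact cyclicInterval_subset_of_mem (by simp) (by simpa using hkt)
      (start_mem_cyclicInterval i hk0) (hi Q)
  have hinj : Set.InjOn t (S.erase P) := by
    intro Q hQ Q' hQ' htt
    replace hQ := (mem_erase.1 hQ).2
    replace hQ' := (mem_erase.1 hQ').2
    by_contra hne
    rcases le_total ((i - j Q : Fin n) : ℕ) ((i - j Q' : Fin n) : ℕ) with hle | hle
    · exact hS Q hQ Q' hQ' (CG_adj_of_subset hne (hmem Q) (hmem Q')
        (cyclicInterval_subset_of_mem hle htt.le (hi Q) (hi Q')))
    · exact hS Q' hQ' Q hQ (CG_adj_of_subset (Ne.symm hne) (hmem Q') (hmem Q)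
        (cyclicInterval_subset_of_mem hle htt.ge (hi Q') (hi Q)))
  have := card_le_card_of_injOn t hmaps hinj
  rw [card_erase_of_mem hP, Nat.card_Ioo] at this
  rw [card_cyclicInterval i hk.le]
  omega

theorem card_le_minPart_of_indep {S : Finset (CGSet n)}
    (hS : ∀ P ∈ S, ∀ Q ∈ S, ¬ (CG n).Adj P Q) {P : CGSet n} (hP : P ∈ S) :
    #S ≤ minPart P.1 :=
  le_inf' _ _ fun _ hI => card_le_card_of_indep hS hP hI

theorem sum_inv_minPart_le_one {S : Finset (CGSet n)}
    (hS : ∀ P ∈ S, ∀ Q ∈ S, ¬ (CG n).Adj P Q) :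
    ∑ P ∈ S, (1 : ℝ) / (minPart P.1 : ℝ) ≤ 1 := by
  obtain rfl | hne := S.eq_empty_or_nonempty
  · simp
  have hpos : (0 : ℝ) < #S := by exact_mod_cast hne.card_pos
  calc ∑ P ∈ S, (1 : ℝ) / (minPart P.1 : ℝ)
      ≤ ∑ _P ∈ S, (1 : ℝ) / #S :=
        sum_le_sum fun P hP =>
          one_div_le_one_div_of_le hpos (by exact_mod_cast card_le_minPart_of_indep hS hP)
    _ = 1 := by rw [sum_const, nsmul_eq_mul, mul_one_div_cancel hpos.ne']

end IndependentSet

section TotalWeight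

variable [NeZero n]

def cyclicVertex (i : Fin n) (k : ℕ) (hk0 : 0 < k) (hk : k < n) : CGSet n :=
  ⟨⟨{cyclicInterval i k, (cyclicInterval i k)ᶜ},
    tkPart_pair_compl ⟨i, start_mem_cyclicInterval i hk0⟩
      (card_pos.1 (by rw [card_compl, Fintype.card_fin, card_cyclicInterval i hk.le]; omega))⟩,
    by
      simp only [CGSet, Set.mem_ofPred_eq, mem_insert, mem_singleton, forall_eq_or_imp,
        forall_eq, isCyclicInterval_iff, compl_cyclicInterval i hk]
      exact ⟨⟨i, k, hk0, hk, rfl⟩, ⟨_, n - k, by omega, by omega, rfl⟩⟩⟩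

theorem minPart_cyclicVertex (i : Fin n) {k : ℕ} (hk0 : 0 < k) (hk : k < n) :
    minPart (cyclicVertex i k hk0 hk).1 = min k (n - k) := by
  rw [minPart_eq_min_card rfl, card_compl, Fintype.card_fin, card_cyclicInterval i hk.le]

theorem exists_cyclicVertex_eq (P : CGSet n) (x : Fin n) :
    ∃ i k, ∃ (hk0 : 0 < k) (hk : k < n),
      x ∈ cyclicInterval i k ∧ cyclicVertex i k hk0 hk = P := by
  obtain ⟨A, hA, hxA⟩ := P.1.2.exists_mem x
  obtain ⟨i, k, hk0, hk, rfl⟩ := isCyclicInterval_iff.1 (P.2 A hA)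
  exact ⟨i, k, hk0, hk, hxA, Subtype.ext (Subtype.ext (P.1.2.eq_pair_compl hA).symm)⟩

theorem cyclicVertex_injective {i i' : Fin n} {k k' : ℕ} {hk0 : 0 < k} {hk : k < n}
    {hk0' : 0 < k'} {hk' : k' < n} (h : cyclicVertex i k hk0 hk = cyclicVertex i' k' hk0' hk')
    {x : Fin n} (hx : x ∈ cyclicInterval i k) (hx' : x ∈ cyclicInterval i' k') :
    i = i' ∧ k = k' := by
  have hA : cyclicInterval i k = cyclicInterval i' k' :=
    (cyclicVertex i' k' hk0' hk').1.2.eq_of_mem_of_mem (h ▸ mem_insert_self _ _)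
      (mem_insert_self _ _) hx hx'
  have hkk : k = k' := by
    rw [← card_cyclicInterval i hk.le, hA, card_cyclicInterval i' hk'.le]
  subst hkk
  exact ⟨cyclicInterval_left_injective hk0 hk hA, rfl⟩

theorem finsum_inv_minPart :
    ∑ᶠ P : CGSet n, (1 : ℝ) / (minPart P.1 : ℝ)
      = ∑ k ∈ Ioo 0 n, (k : ℝ) / (min k (n - k) : ℕ) := by
  classical
  have hzero {s k : ℕ} (hs : s < n) :
      (0 : Fin n) ∈ cyclicInterval (-(s : Fin n)) k ↔ s < k := by
    rw [mem_cyclicInterval, zero_sub, neg_neg, Fin.val_cast_of_lt hs]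
  rw [finsum_eq_sum_of_fintype]
  symm
  -- `⟨k, s⟩` indexes the vertex whose part containing `0` is `cyclicInterval (-s) k`
  calc ∑ k ∈ Ioo 0 n, (k : ℝ) / (min k (n - k) : ℕ)
      = ∑ x ∈ (Ioo 0 n).sigma fun k => range k, (1 : ℝ) / (min x.1 (n - x.1) : ℕ) := by
        simp only [sum_sigma, sum_const, card_range, nsmul_eq_mul, mul_one_div]
    _ = ∑ P : CGSet n, (1 : ℝ) / (minPart P.1 : ℝ) := by
      refine sum_bij (fun x hx => cyclicVertex (-(x.2 : Fin n)) x.1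
        (mem_Ioo.1 (mem_sigma.1 hx).1).1 (mem_Ioo.1 (mem_sigma.1 hx).1).2)
        (fun _ _ => mem_univ _) ?_ ?_ ?_
      · rintro ⟨k, s⟩ hx ⟨k', s'⟩ hx' h
        simp only [mem_sigma, mem_Ioo, mem_range] at hx hx'
        dsimp only at h
        obtain ⟨hs, rfl⟩ := cyclicVertex_injective h ((hzero (s := s) (by omega)).2 hx.2)
          ((hzero (s := s') (by omega)).2 hx'.2)
        have := congrArg Fin.val (neg_injective hs)
        rw [Fin.val_cast_of_lt (by omega), Fin.val_cast_of_lt (by omega)] at this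
        rw [this]
      · intro P _
        obtain ⟨i, k, hk0, hk, hi, rfl⟩ := exists_cyclicVertex_eq P 0
        refine ⟨⟨k, ((-i : Fin n) : ℕ)⟩, ?_, ?_⟩
        · rw [mem_cyclicInterval, zero_sub] at hi
          simpa [hk0, hk] using hi
        · simp only [Fin.cast_val_eq_self, neg_neg]
      · rintro ⟨k, s⟩ _
        rw [minPart_cyclicVertex]

end TotalWeight

theorem sum_Ioo_div_min (hn : 0 < n) :
    ∑ k ∈ Ioo 0 n, (k : ℝ) / (min k (n - k) : ℕ)
      = n * ((harmonic ((n - 1) / 2) : ℚ) : ℝ) + (1 - ((n % 2 : ℕ) : ℝ)) := by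
  have hIoo : Ioo 0 n = Ioc 0 (n - 1) := by ext; simp; omega
  rw [hIoo, ← sum_Ioc_consecutive _ (Nat.zero_le (n / 2)) (by omega : n / 2 ≤ n - 1)]
  have hlow : ∑ k ∈ Ioc 0 (n / 2), (k : ℝ) / (min k (n - k) : ℕ) = (n / 2 : ℕ) := by
    rw [sum_congr rfl fun k hk => ?_, sum_const, Nat.card_Ioc, nsmul_one, Nat.sub_zero]
    obtain ⟨hk0, hk⟩ := mem_Ioc.1 hk
    rw [min_eq_left (by omega), div_self (by positivity)]
  have hhigh : ∑ k ∈ Ioc (n / 2) (n - 1), (k : ℝ) / (min k (n - k) : ℕ)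
      = ∑ j ∈ Icc 1 ((n - 1) / 2), ((n : ℝ) / j - 1) := by
    refine sum_nbij' (n - ·) (n - ·) (fun k hk => ?_) (fun j hj => ?_) (fun k hk => ?_)
      (fun j hj => ?_) (fun k hk => ?_)
    all_goals simp only [mem_Ioc, mem_Icc] at *
    any_goals omega
    rw [min_eq_right (by omega), Nat.cast_sub (by omega)]
    have : (n : ℝ) - k ≠ 0 := sub_ne_zero.2 (by exact_mod_cast (by omega : n ≠ k))
    field_simp
    ring
  have hmid : (n / 2 : ℕ) = ((n - 1) / 2 : ℕ) + (1 - ((n % 2 : ℕ) : ℝ)) := by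
    rcases Nat.mod_two_eq_zero_or_one n with h | h <;>
    · rw [h]
      norm_num
      exact_mod_cast (by omega)
  rw [hlow, hhigh, sum_sub_distrib, sum_const, Nat.card_Icc, Nat.add_sub_cancel, nsmul_one, hmid]
  simp only [div_eq_mul_inv, ← mul_sum, harmonic_eq_sum_Icc, Rat.cast_sum, Rat.cast_inv,
    Rat.cast_natCast]
  ring

/-- The weight `w({A,B}) = 1/min(|A|,|B|)` is a fractional clique of `CG(n)`:
every independent set has total weight at most 1, and the total weight over all
vertices is `n·H_{⌊(n-1)/2⌋} + (1 - p(n))`. -/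
theorem fractional_clique_CG (n : ℕ) (hn : 2 ≤ n) :
    (∀ S : Finset ↥(CGSet n), (∀ P ∈ S, ∀ Q ∈ S, ¬ (CG n).Adj P Q) →
        ∑ P ∈ S, (1 : ℝ) / (minPart P.1 : ℝ) ≤ 1) ∧
      ∑ᶠ P : ↥(CGSet n), (1 : ℝ) / (minPart P.1 : ℝ)
        = (n : ℝ) * ((harmonic ((n - 1) / 2) : ℚ) : ℝ) + (1 - ((n % 2 : ℕ) : ℝ)) := by
  have : NeZero n := ⟨by omega⟩
  exact ⟨fun _ => sum_inv_minPart_le_one, finsum_inv_minPart.trans (sum_Ioo_div_min (by omega))⟩
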